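/- Let n ≥ 3, let m ∈ ℝ with m ≠ 1, let U ⊆ ℝⁿ be a connected open set, and let a : U → (symmetric invertible n×n real matrices) be a smooth matrix field in Kundt form with data H, W_a, h_{ab}. Let Γ^k_{ij} be the Christoffel symbols of a and let b_i = δ^u_i. Then there exists a smooth function c : U → ℝ such that ∂_i b_j − Σ_k Γ^k_{ij} b_k = c (1−m) b_i b_j on U if and only if ∂_v W_a = 0 and ∂_v h_{ab} = 0 on U for all a, b ∈ {3,…,n}; and in that case c = −∂_v H / (2(1−m)). -/

import Mathlib

open Matrix
open scoped BigOperators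

noncomputable section

/-- Partial derivative of `f : ℝⁿ → ℝ` in the `i`-th coordinate direction at `p`. -/
def pd {n : ℕ} (i : Fin n) (f : (Fin n → ℝ) → ℝ) (p : Fin n → ℝ) : ℝ :=
  fderiv ℝ f p (Pi.single i 1)

/-- Christoffel symbols `Γ^k_{ij}` of a matrix field `a`. -/
def christoffel {n : ℕ} (a : (Fin n → ℝ) → Matrix (Fin n) (Fin n) ℝ)
    (k i j : Fin n) (p : Fin n → ℝ) : ℝ :=
  (1 / 2) * ∑ l, (a p)⁻¹ k l *
    (pd i (fun q => a q j l) p + pd j (fun q => a q i l) p - pd l (fun q => a q i j) p)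

/-- The coordinate index `u` (the first coordinate). -/
def uIdx {n : ℕ} (_hn : 3 ≤ n) : Fin n := ⟨0, by omega⟩

/-- The coordinate index `v` (the second coordinate). -/
def vIdx {n : ℕ} (_hn : 3 ≤ n) : Fin n := ⟨1, by omega⟩

/-- The embedding of the transverse indices `{3,…,n}` (zero-based: `{2,…,n-1}`). -/
def embIdx {n : ℕ} (i : Fin (n - 2)) : Fin n := ⟨(i : ℕ) + 2, by have := i.isLt; omega⟩

/-- A matrix is in Kundt form with data `H`, `W`, `h`. -/
def IsKundt {n : ℕ} (hn : 3 ≤ n) (M : Matrix (Fin n) (Fin n) ℝ)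
    (H : ℝ) (W : Fin n → ℝ) (h : Fin n → Fin n → ℝ) : Prop :=
  M (uIdx hn) (uIdx hn) = H ∧
  M (uIdx hn) (vIdx hn) = -1 ∧ M (vIdx hn) (uIdx hn) = -1 ∧ M (vIdx hn) (vIdx hn) = 0 ∧
  (∀ a : Fin n, 2 ≤ (a : ℕ) →
    M (uIdx hn) a = W a / 2 ∧ M a (uIdx hn) = W a / 2 ∧
    M (vIdx hn) a = 0 ∧ M a (vIdx hn) = 0) ∧
  (∀ a b : Fin n, 2 ≤ (a : ℕ) → 2 ≤ (b : ℕ) → M a b = h a b)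

/-- The affine Ricci tensor `R̄_{lk}` of a connection with coefficients `Γ^k_{ij}`. -/
def affineRicci {n : ℕ} (Γ : Fin n → Fin n → Fin n → (Fin n → ℝ) → ℝ)
    (l k : Fin n) (p : Fin n → ℝ) : ℝ :=
  (∑ i, pd i (Γ i k l) p) - pd k (fun q => ∑ i, Γ i i l q) p +
    ∑ i, ∑ m, (Γ i m i p * Γ m k l p - Γ i m k p * Γ m i l p)

/-!
In Kundt form the `v`-th row and column of `a` both equal `-e_u`, independently of the point.
Hence the `u`-th row of `a⁻¹` is `-e_v`, and since `∂_i a_{jv} = 0` the Christoffel symbols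
with upper index `u` reduce to `Γ^u_{ij} = ∂_v a_{ij} / 2`. As `b = du` has constant
components, the Berwald equation becomes `-∂_v a_{ij} / 2 = c (1 - m) δ^u_i δ^u_j`: its
`(u, u)` entry fixes `c = -∂_v H / (2 (1 - m))`, and the remaining entries say exactly that
`∂_v W_a` and `∂_v h_{ab}` vanish, the entries `a_{vj}` and `a_{iv}` being constant.
-/

namespace Matrix

variable {ι K : Type*} [Fintype ι] [DecidableEq ι] [Field K]

theorem inv_row_eq_neg_single_of_row_eq_neg_single {M : Matrix ι ι K} (hM : IsUnit M.det)
    {u v : ι} (hrow : M v = -Pi.single u 1) : M⁻¹ u = -Pi.single v 1 := by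
  have hu : Pi.single u 1 = -Pi.single v 1 ᵥ* M := by
    rw [neg_vecMul, single_vecMul, one_smul, row, hrow, neg_neg]
  calc M⁻¹ u = Pi.single u 1 ᵥ* M⁻¹ := by rw [single_vecMul, one_smul, row]
    _ = -Pi.single v 1 := by rw [hu, vecMul_vecMul, mul_nonsing_inv M hM, vecMul_one]

end Matrix

section PartialDerivatives

variable {n : ℕ} {U : Set (Fin n → ℝ)} {f g : (Fin n → ℝ) → ℝ} {p : Fin n → ℝ}

theorem pd_congr_of_eqOn (hU : IsOpen U) (hp : p ∈ U) (hfg : Set.EqOn f g U) (i : Fin n) :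
    pd i f p = pd i g p := by
  rw [pd, Filter.EventuallyEq.fderiv_eq (Filter.eventuallyEq_of_mem (hU.mem_nhds hp) hfg), pd]

theorem pd_eq_zero_of_eqOn_const (hU : IsOpen U) (hp : p ∈ U) {c : ℝ}
    (hf : Set.EqOn f (fun _ => c) U) (i : Fin n) : pd i f p = 0 := by
  rw [pd_congr_of_eqOn hU hp hf, pd, fderiv_const_apply]; rfl

theorem pd_div_const (i : Fin n) (f : (Fin n → ℝ) → ℝ) (c : ℝ) (p : Fin n → ℝ) :
    pd i (fun q => f q / c) p = pd i f p / c := by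
  have hf : (fun q => f q / c) = c⁻¹ • f := by
    funext q; simp [div_eq_inv_mul]
  rw [pd, hf, fderiv_const_smul_field, pd]
  simp [div_eq_inv_mul]

theorem ContDiffOn.pd (hf : ContDiffOn ℝ (⊤ : ℕ∞) f U) (hU : IsOpen U) (i : Fin n) :
    ContDiffOn ℝ (⊤ : ℕ∞) (pd i f) U :=
  (hf.fderiv_of_isOpen hU (by exact_mod_cast le_top)).clm_apply contDiffOn_const

end PartialDerivatives

section Christoffel

variable {n : ℕ} {U : Set (Fin n → ℝ)} {a : (Fin n → ℝ) → Matrix (Fin n) (Fin n) ℝ}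
  {p : Fin n → ℝ} {u v : Fin n}

theorem christoffel_eq_of_inv_row_eq_neg_single (h : (a p)⁻¹ u = -Pi.single v 1) (i j : Fin n) :
    christoffel a u i j p = -(1 / 2) *
      (pd i (fun q => a q j v) p + pd j (fun q => a q i v) p - pd v (fun q => a q i j) p) := by
  simp only [christoffel, h, Pi.neg_apply, Pi.single_apply, neg_mul, ite_mul, one_mul, zero_mul,
    Finset.sum_neg_distrib, Finset.sum_ite_eq', Finset.mem_univ, if_true]
  ring

theorem christoffel_eq_half_pd_of_row_col_eq_neg_single (hU : IsOpen U) (hp : p ∈ U)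
    (hinv : IsUnit (a p).det) (hrow : ∀ q ∈ U, a q v = -Pi.single u 1)
    (hcol : ∀ q ∈ U, (a q)ᵀ v = -Pi.single u 1) (i j : Fin n) :
    christoffel a u i j p = 1 / 2 * pd v (fun q => a q i j) p := by
  have hconst (k : Fin n) (w : Fin n) : pd w (fun q => a q k v) p = 0 :=
    pd_eq_zero_of_eqOn_const hU hp (c := (-Pi.single u 1 : Fin n → ℝ) k)
      (fun q hq => congrFun (hcol q hq) k) w
  rw [christoffel_eq_of_inv_row_eq_neg_single
    (Matrix.inv_row_eq_neg_single_of_row_eq_neg_single hinv (hrow p hp)), hconst, hconst]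
  ring

theorem pd_sub_sum_christoffel_eq (hU : IsOpen U) (hp : p ∈ U)
    (hinv : IsUnit (a p).det) (hrow : ∀ q ∈ U, a q v = -Pi.single u 1)
    (hcol : ∀ q ∈ U, (a q)ᵀ v = -Pi.single u 1) (i j : Fin n) :
    pd i (fun _ => if j = u then (1 : ℝ) else 0) p
        - ∑ k, christoffel a k i j p * (if k = u then (1 : ℝ) else 0)
      = -(1 / 2) * pd v (fun q => a q i j) p := by
  rw [pd_eq_zero_of_eqOn_const hU hp (Set.eqOn_refl _ _)]
  simp only [mul_ite, mul_one, mul_zero, Finset.sum_ite_eq', Finset.mem_univ, if_true]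
  rw [christoffel_eq_half_pd_of_row_col_eq_neg_single hU hp hinv hrow hcol]
  ring

end Christoffel

section Kundt

variable {n : ℕ} {hn : 3 ≤ n}

theorem eq_uIdx_or_eq_vIdx_or_two_le (hn : 3 ≤ n) (i : Fin n) :
    i = uIdx hn ∨ i = vIdx hn ∨ 2 ≤ (i : ℕ) := by
  rcases i with ⟨_ | _ | i, hi⟩
  · exact Or.inl rfl
  · exact Or.inr (Or.inl rfl)
  · exact Or.inr (Or.inr (by simp))

theorem uIdx_ne_vIdx (hn : 3 ≤ n) : uIdx hn ≠ vIdx hn := by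
  simp [uIdx, vIdx]

theorem ne_uIdx_of_two_le {i : Fin n} (hi : 2 ≤ (i : ℕ)) : i ≠ uIdx hn := by
  rintro rfl; simp [uIdx] at hi

namespace IsKundt

variable {M : Matrix (Fin n) (Fin n) ℝ} {H : ℝ} {W : Fin n → ℝ} {h : Fin n → Fin n → ℝ}

theorem row_vIdx (hK : IsKundt hn M H W h) : M (vIdx hn) = -Pi.single (uIdx hn) 1 := by
  obtain ⟨-, -, hvu, hvv, hua, -⟩ := hK
  funext j
  rcases eq_uIdx_or_eq_vIdx_or_two_le hn j with rfl | rfl | hj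
  · simpa using hvu
  · simpa [(uIdx_ne_vIdx hn).symm] using hvv
  · simpa [ne_uIdx_of_two_le hj] using (hua j hj).2.2.1

theorem transpose_row_vIdx (hK : IsKundt hn M H W h) :
    Mᵀ (vIdx hn) = -Pi.single (uIdx hn) 1 := by
  obtain ⟨-, huv, -, hvv, hua, -⟩ := hK
  funext j
  rcases eq_uIdx_or_eq_vIdx_or_two_le hn j with rfl | rfl | hj
  · simpa using huv
  · simpa [(uIdx_ne_vIdx hn).symm] using hvv
  · simpa [ne_uIdx_of_two_le hj] using (hua j hj).2.2.2

end IsKundt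

variable {U : Set (Fin n → ℝ)} {a : (Fin n → ℝ) → Matrix (Fin n) (Fin n) ℝ}
  {H : (Fin n → ℝ) → ℝ} {W : (Fin n → ℝ) → Fin n → ℝ} {h : (Fin n → ℝ) → Fin n → Fin n → ℝ}
  {p : Fin n → ℝ}

theorem pd_vIdx_entry_eq_zero_iff_of_isKundt (hU : IsOpen U)
    (hK : ∀ q ∈ U, IsKundt hn (a q) (H q) (W q) (h q)) (hp : p ∈ U) :
    (∀ i j, (i, j) ≠ (uIdx hn, uIdx hn) → pd (vIdx hn) (fun q => a q i j) p = 0) ↔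
      ∀ α β : Fin n, 2 ≤ (α : ℕ) → 2 ≤ (β : ℕ) →
        pd (vIdx hn) (fun q => W q α) p = 0 ∧ pd (vIdx hn) (fun q => h q α β) p = 0 := by
  have hrow (j : Fin n) : pd (vIdx hn) (fun q => a q (vIdx hn) j) p = 0 :=
    pd_eq_zero_of_eqOn_const hU hp (c := (-Pi.single (uIdx hn) 1 : Fin n → ℝ) j)
      (fun q hq => congrFun (hK q hq).row_vIdx j) _
  have hcol (i : Fin n) : pd (vIdx hn) (fun q => a q i (vIdx hn)) p = 0 :=
    pd_eq_zero_of_eqOn_const hU hp (c := (-Pi.single (uIdx hn) 1 : Fin n → ℝ) i)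
      (fun q hq => congrFun (hK q hq).transpose_row_vIdx i) _
  have hua {α : Fin n} (hα : 2 ≤ (α : ℕ)) :
      pd (vIdx hn) (fun q => a q (uIdx hn) α) p = pd (vIdx hn) (fun q => W q α) p / 2 := by
    rw [pd_congr_of_eqOn hU hp (fun q hq => ((hK q hq).2.2.2.2.1 α hα).1), pd_div_const]
  have hau {α : Fin n} (hα : 2 ≤ (α : ℕ)) :
      pd (vIdx hn) (fun q => a q α (uIdx hn)) p = pd (vIdx hn) (fun q => W q α) p / 2 := by
    rw [pd_congr_of_eqOn hU hp (fun q hq => ((hK q hq).2.2.2.2.1 α hα).2.1), pd_div_const]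
  have hab {α β : Fin n} (hα : 2 ≤ (α : ℕ)) (hβ : 2 ≤ (β : ℕ)) :
      pd (vIdx hn) (fun q => a q α β) p = pd (vIdx hn) (fun q => h q α β) p :=
    pd_congr_of_eqOn hU hp (fun q hq => (hK q hq).2.2.2.2.2 α β hα hβ) _
  constructor
  · intro hvan α β hα hβ
    constructor
    · have := hvan (uIdx hn) α (by simp [ne_uIdx_of_two_le hα])
      rw [hua hα] at this
      linarith
    · rw [← hab hα hβ]
      exact hvan α β (by simp [ne_uIdx_of_two_le hα])
  · intro hWh i j hij
    rcases eq_uIdx_or_eq_vIdx_or_two_le hn i with rfl | rfl | hi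
    · rcases eq_uIdx_or_eq_vIdx_or_two_le hn j with rfl | rfl | hj
      · exact absurd rfl hij
      · exact hcol _
      · rw [hua hj, (hWh j j hj hj).1, zero_div]
    · exact hrow j
    · rcases eq_uIdx_or_eq_vIdx_or_two_le hn j with rfl | rfl | hj
      · rw [hau hi, (hWh i i hi hi).1, zero_div]
      · exact hcol _
      · rw [hab hi hj, (hWh i j hi hj).2]

end Kundt

theorem forall_neg_half_mul_eq_iff {ι : Type*} [DecidableEq ι] (D : ι → ι → ℝ) (u : ι)
    {m c : ℝ} (hm : m ≠ 1) :
    (∀ i j, -(1 / 2) * D i j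
        = c * (1 - m) * ((if i = u then (1 : ℝ) else 0) * (if j = u then (1 : ℝ) else 0))) ↔
      c = -D u u / (2 * (1 - m)) ∧ ∀ i j, (i, j) ≠ (u, u) → D i j = 0 := by
  have hm' : (1 : ℝ) - m ≠ 0 := sub_ne_zero.mpr hm.symm
  constructor
  · intro hD
    refine ⟨?_, fun i j hij => ?_⟩
    · have := hD u u
      simp only [if_true, mul_one] at this
      field_simp
      linarith
    · have := hD i j
      by_cases hi : i = u
      · have hj : j ≠ u := fun hj => hij (by rw [hi, hj])
        simp only [hj, if_false, mul_zero] at this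
        linarith
      · simp only [hi, if_false, zero_mul, mul_zero] at this
        linarith
  · rintro ⟨rfl, hD⟩ i j
    by_cases hij : (i, j) = (u, u)
    · obtain ⟨rfl, rfl⟩ := Prod.mk.inj hij
      field_simp
      simp
    · have hne : (if i = u then (1 : ℝ) else 0) * (if j = u then (1 : ℝ) else 0) = 0 := by
        by_cases hi : i = u
        · simp [hi, show j ≠ u by rintro rfl; exact hij (by rw [hi])]
        · simp [hi]
      rw [hD i j hij, hne]
      ring

theorem berwald_at_iff_of_isKundt {n : ℕ} {hn : 3 ≤ n} {m : ℝ} (hm : m ≠ 1)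
    {U : Set (Fin n → ℝ)} (hU : IsOpen U) {a : (Fin n → ℝ) → Matrix (Fin n) (Fin n) ℝ}
    {H : (Fin n → ℝ) → ℝ} {W : (Fin n → ℝ) → Fin n → ℝ} {h : (Fin n → ℝ) → Fin n → Fin n → ℝ}
    (hK : ∀ q ∈ U, IsKundt hn (a q) (H q) (W q) (h q)) {p : Fin n → ℝ} (hp : p ∈ U)
    (hinv : IsUnit (a p).det) (c : ℝ) :
    (∀ i j : Fin n,
        pd i (fun _ => if j = uIdx hn then (1 : ℝ) else 0) p
            - ∑ k, christoffel a k i j p * (if k = uIdx hn then (1 : ℝ) else 0)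
          = c * (1 - m) * ((if i = uIdx hn then (1 : ℝ) else 0) *
              (if j = uIdx hn then (1 : ℝ) else 0))) ↔
      c = -(pd (vIdx hn) H p) / (2 * (1 - m)) ∧
        ∀ α β : Fin n, 2 ≤ (α : ℕ) → 2 ≤ (β : ℕ) →
          pd (vIdx hn) (fun q => W q α) p = 0 ∧ pd (vIdx hn) (fun q => h q α β) p = 0 := by
  have hHuu : pd (vIdx hn) (fun q => a q (uIdx hn) (uIdx hn)) p = pd (vIdx hn) H p :=
    pd_congr_of_eqOn hU hp (fun q hq => (hK q hq).1) _
  simp only [pd_sub_sum_christoffel_eq hU hp hinv (fun q hq => (hK q hq).row_vIdx)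
    (fun q hq => (hK q hq).transpose_row_vIdx)]
  rw [forall_neg_half_mul_eq_iff (fun i j => pd (vIdx hn) (fun q => a q i j) p) _ hm, hHuu,
    pd_vIdx_entry_eq_zero_iff_of_isKundt hU hK hp]

theorem stmt6_general {n : ℕ} (hn : 3 ≤ n) (m : ℝ) (hm : m ≠ 1)
    (U : Set (Fin n → ℝ)) (hU : IsOpen U)
    (a : (Fin n → ℝ) → Matrix (Fin n) (Fin n) ℝ)
    (ha_inv : ∀ p ∈ U, IsUnit (a p).det)
    (H : (Fin n → ℝ) → ℝ) (W : (Fin n → ℝ) → Fin n → ℝ)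
    (h : (Fin n → ℝ) → Fin n → Fin n → ℝ)
    (hH : ContDiffOn ℝ (⊤ : ℕ∞) H U)
    (hKundt : ∀ p ∈ U, IsKundt hn (a p) (H p) (W p) (h p)) :
    ((∃ c : (Fin n → ℝ) → ℝ, ContDiffOn ℝ (⊤ : ℕ∞) c U ∧
        ∀ p ∈ U, ∀ i j : Fin n,
          pd i (fun _ => if j = uIdx hn then (1 : ℝ) else 0) p
              - ∑ k, christoffel a k i j p * (if k = uIdx hn then (1 : ℝ) else 0)
            = c p * (1 - m) * ((if i = uIdx hn then (1 : ℝ) else 0) *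
                (if j = uIdx hn then (1 : ℝ) else 0)))
      ↔ (∀ p ∈ U, ∀ α β : Fin n, 2 ≤ (α : ℕ) → 2 ≤ (β : ℕ) →
          pd (vIdx hn) (fun q => W q α) p = 0 ∧ pd (vIdx hn) (fun q => h q α β) p = 0))
    ∧ (∀ c : (Fin n → ℝ) → ℝ,
        (∀ p ∈ U, ∀ i j : Fin n,
          pd i (fun _ => if j = uIdx hn then (1 : ℝ) else 0) p
              - ∑ k, christoffel a k i j p * (if k = uIdx hn then (1 : ℝ) else 0)
            = c p * (1 - m) * ((if i = uIdx hn then (1 : ℝ) else 0) *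
                (if j = uIdx hn then (1 : ℝ) else 0))) →
        ∀ p ∈ U, c p = -(pd (vIdx hn) H p) / (2 * (1 - m))) := by
  have hB {p : Fin n → ℝ} (hp : p ∈ U) :=
    berwald_at_iff_of_isKundt hm hU hKundt hp (ha_inv p hp)
  refine ⟨⟨?_, fun hWh => ?_⟩, fun c hc p hp => ((hB hp _).1 (hc p hp)).1⟩
  · rintro ⟨c, -, hc⟩ p hp
    exact ((hB hp _).1 (hc p hp)).2
  · exact ⟨fun p => -(pd (vIdx hn) H p) / (2 * (1 - m)), (hH.pd hU _).neg.div_const _,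
      fun p hp => (hB hp _).2 ⟨rfl, hWh p hp⟩⟩

theorem stmt6 {n : ℕ} (hn : 3 ≤ n) (m : ℝ) (hm : m ≠ 1)
    (U : Set (Fin n → ℝ)) (hU : IsOpen U) (hconn : IsConnected U)
    (a : (Fin n → ℝ) → Matrix (Fin n) (Fin n) ℝ)
    (ha_smooth : ∀ i j, ContDiffOn ℝ (⊤ : ℕ∞) (fun p => a p i j) U)
    (ha_symm : ∀ p ∈ U, (a p).IsSymm) (ha_inv : ∀ p ∈ U, IsUnit (a p).det)
    (H : (Fin n → ℝ) → ℝ) (W : (Fin n → ℝ) → Fin n → ℝ)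
    (h : (Fin n → ℝ) → Fin n → Fin n → ℝ)
    (hH : ContDiffOn ℝ (⊤ : ℕ∞) H U)
    (hW : ∀ i, ContDiffOn ℝ (⊤ : ℕ∞) (fun p => W p i) U)
    (hh : ∀ i j, ContDiffOn ℝ (⊤ : ℕ∞) (fun p => h p i j) U)
    (hKundt : ∀ p ∈ U, IsKundt hn (a p) (H p) (W p) (h p)) :
    ((∃ c : (Fin n → ℝ) → ℝ, ContDiffOn ℝ (⊤ : ℕ∞) c U ∧
        ∀ p ∈ U, ∀ i j : Fin n,
          pd i (fun _ => if j = uIdx hn then (1 : ℝ) else 0) p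
              - ∑ k, christoffel a k i j p * (if k = uIdx hn then (1 : ℝ) else 0)
            = c p * (1 - m) * ((if i = uIdx hn then (1 : ℝ) else 0) *
                (if j = uIdx hn then (1 : ℝ) else 0)))
      ↔ (∀ p ∈ U, ∀ α β : Fin n, 2 ≤ (α : ℕ) → 2 ≤ (β : ℕ) →
          pd (vIdx hn) (fun q => W q α) p = 0 ∧ pd (vIdx hn) (fun q => h q α β) p = 0))
    ∧ (∀ c : (Fin n → ℝ) → ℝ,
        (∀ p ∈ U, ∀ i j : Fin n,
          pd i (fun _ => if j = uIdx hn then (1 : ℝ) else 0) p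
              - ∑ k, christoffel a k i j p * (if k = uIdx hn then (1 : ℝ) else 0)
            = c p * (1 - m) * ((if i = uIdx hn then (1 : ℝ) else 0) *
                (if j = uIdx hn then (1 : ℝ) else 0))) →
        ∀ p ∈ U, c p = -(pd (vIdx hn) H p) / (2 * (1 - m))) :=
  stmt6_general hn m hm U hU a ha_inv H W h hH hKundt

end
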